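/- arXiv:1104.4294 — 4 statements merged into one kernel-verified Lean document; each statement's English description precedes it below -/
import Mathlib

section
/- (Lemma 2.1, pointwise form) Let e ∈ C^{2,1}(closure(Ω'×(0,∞))) be bounded and satisfy ∂_t e − Σ_{i,j} ∂_j(a_{ij} ∂_i e) + Σ_i b_i ∂_i e + c e = F(x,t,u₁) − F(x,t,u₂) in Ω'×(0,∞), where e = u₁ − u₂. Let g ∈ C²(ℝⁿ) and f ∈ C¹((0,∞)) be strictly positive and bounded, and set Φ = e² g f, c_i = b_i + 2 Σ_j a_{ij} (∂_j g)/g, and 𝔐 = [ Σ_{i,j} ( −a_{ij} (∂_{ij} g)/g − (∂_j a_{ij})(∂_i g)/g + 2 a_{ij} (∂_i g)(∂_j g)/g² ) + f'/f + 2(C + ‖c‖_∞) + Σ_i b_i (∂_i g)/g ] f g. Then pointwise on Ω'×(0,∞): ∂_t Φ − Σ_{i,j} ∂_j(a_{ij} ∂_i Φ) + Σ_i c_i ∂_i Φ ≤ e² 𝔐. In particular, if f'(t)/f(t) + Σ_{i,j}(−a_{ij}(∂_{ij}g)/g − (∂_j a_{ij})(∂_i g)/g + 2a_{ij}(∂_i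 g)(∂_j g)/g²)(x) + 2(C + ‖c‖_∞) + Σ_i b_i(x)(∂_i g)(x)/g(x) ≤ 0 for all (x,t) ∈ Ω'×(0,∞), then ∂_t Φ − Σ_{i,j} ∂_j(a_{ij} ∂_i Φ) + Σ_i c_i ∂_i Φ ≤ 0. -/
/-!
Write `D u = Σ_j ∂_j (Σ_i a_ij ∂_i u)` and `⟨ξ, η⟩_A = Σ_ij a_ij ξ_i η_j`. For symmetric `a` the
product rule reads `D (u v) = u D v + v D u + 2 ⟨∇u, ∇v⟩_A`, so with `Φ = e² g f`

  `D Φ = f (e² D g + 2 e g D e + 2 g ⟨∇e, ∇e⟩_A + 4 e ⟨∇e, ∇g⟩_A)`.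

The drift `c_i = b_i + 2 (A ∇g)_i / g` is chosen so that `c · ∇Φ` produces `+4 e f ⟨∇e, ∇g⟩_A`,
cancelling the mixed term. What remains is `2 e g f (∂_t e − D e + b · ∇e)`, equal by the equation
to `2 e g f (ΔF − c e) ≤ 2 g f (C + ‖c‖_∞) e²`, plus `e²` times the `g`, `f` terms of `𝔐`, minus
`2 g f ⟨∇e, ∇e⟩_A ≥ 0` by ellipticity.
-/

open Real Set

/-- The partial derivative `∂_i u` of a function on `ℝⁿ`. -/
noncomputable def pd {n : ℕ} (i : Fin n) (u : (Fin n → ℝ) → ℝ) (x : Fin n → ℝ) : ℝ :=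
  fderiv ℝ u x (Pi.single i 1)

open scoped Matrix

section PartialDerivatives

variable {n : ℕ} {u v : (Fin n → ℝ) → ℝ} {x : Fin n → ℝ}

lemma pd_add (i : Fin n) (hu : DifferentiableAt ℝ u x) (hv : DifferentiableAt ℝ v x) :
    pd i (fun y => u y + v y) x = pd i u x + pd i v x := by
  simp only [pd, fderiv_fun_add hu hv, add_apply]

lemma pd_mul (i : Fin n) (hu : DifferentiableAt ℝ u x) (hv : DifferentiableAt ℝ v x) :
    pd i (fun y => u y * v y) x = pd i u x * v x + u x * pd i v x := by
  simp only [pd, fderiv_fun_mul hu hv, add_apply, smul_apply, smul_eq_mul]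
  ring

lemma pd_mul_const (i : Fin n) (hu : DifferentiableAt ℝ u x) (k : ℝ) :
    pd i (fun y => u y * k) x = pd i u x * k := by
  simp only [pd, fderiv_mul_const hu, smul_apply, smul_eq_mul]
  ring

lemma pd_sum (i : Fin n) {ι : Type*} {s : Finset ι} {A : ι → (Fin n → ℝ) → ℝ}
    (hA : ∀ k ∈ s, DifferentiableAt ℝ (A k) x) :
    pd i (fun y => ∑ k ∈ s, A k y) x = ∑ k ∈ s, pd i (A k) x := by
  simp only [pd, fderiv_fun_sum hA, sum_apply]

lemma ContDiff.differentiable_pd {m : WithTop ℕ∞} (hu : ContDiff ℝ m u) (hm : 2 ≤ m)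
    (i : Fin n) : Differentiable ℝ (pd i u) :=
  ((hu.fderiv_right (m := 1) hm).clm_apply contDiff_const).differentiable one_ne_zero

noncomputable def grad (u : (Fin n → ℝ) → ℝ) (x : Fin n → ℝ) : Fin n → ℝ :=
  fun i => pd i u x

lemma grad_mul (hu : DifferentiableAt ℝ u x) (hv : DifferentiableAt ℝ v x) :
    grad (fun y => u y * v y) x = v x • grad u x + u x • grad v x := by
  funext i
  simp only [grad, pd_mul i hu hv, Pi.add_apply, Pi.smul_apply, smul_eq_mul]
  ring

end PartialDerivatives

theorem Matrix.sum_sum_mul_eq_dotProduct_mulVec {ι R : Type*} [Fintype ι] [CommSemiring R]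
    (A : Matrix ι ι R) (ξ η : ι → R) :
    ∑ i, ∑ j, A i j * ξ i * η j = ξ ⬝ᵥ A *ᵥ η := by
  simp only [dotProduct, mulVec, Finset.mul_sum]
  exact Finset.sum_congr rfl fun i _ => Finset.sum_congr rfl fun j _ => by ring

section DivergenceForm

variable {n : ℕ} {a : Fin n → Fin n → (Fin n → ℝ) → ℝ} {u v w h : (Fin n → ℝ) → ℝ}
  {x : Fin n → ℝ}

def coeffMatrix (a : Fin n → Fin n → (Fin n → ℝ) → ℝ) (x : Fin n → ℝ) :
    Matrix (Fin n) (Fin n) ℝ :=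
  Matrix.of fun i j => a i j x

noncomputable def divAGrad (a : Fin n → Fin n → (Fin n → ℝ) → ℝ) (u : (Fin n → ℝ) → ℝ)
    (x : Fin n → ℝ) : ℝ :=
  ∑ j, pd j (fun y => ∑ i, a i j y * pd i u y) x

lemma differentiableAt_flux (ha : ∀ i j, DifferentiableAt ℝ (a i j) x)
    (hu : ∀ i, DifferentiableAt ℝ (pd i u) x) (j : Fin n) :
    DifferentiableAt ℝ (fun y => ∑ i, a i j y * pd i u y) x := by
  fun_prop

lemma divAGrad_eq_sum (ha : ∀ i j, DifferentiableAt ℝ (a i j) x)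
    (hu : ∀ i, DifferentiableAt ℝ (pd i u) x) :
    divAGrad a u x = ∑ i, ∑ j, (pd j (a i j) x * pd i u x + a i j x * pd j (pd i u) x) := by
  rw [divAGrad, Finset.sum_comm]
  refine Finset.sum_congr rfl fun j _ => ?_
  rw [pd_sum j fun i _ => (ha i j).fun_mul (hu i)]
  exact Finset.sum_congr rfl fun i _ => pd_mul j (ha i j) (hu i)

lemma divAGrad_mul_const (ha : ∀ i j, DifferentiableAt ℝ (a i j) x)
    (hu : Differentiable ℝ u) (hu' : ∀ i, DifferentiableAt ℝ (pd i u) x) (k : ℝ) :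
    divAGrad a (fun y => u y * k) x = divAGrad a u x * k := by
  have hflux : ∀ j, (fun y => ∑ i, a i j y * pd i (fun y => u y * k) y)
      = fun y => (∑ i, a i j y * pd i u y) * k := fun j => by
    funext y
    simp only [pd_mul_const _ (hu y), Finset.sum_mul, mul_assoc]
  rw [divAGrad, divAGrad, Finset.sum_mul]
  exact Finset.sum_congr rfl fun j _ => by
    rw [hflux j, pd_mul_const _ (differentiableAt_flux ha hu' j)]

lemma divAGrad_mul (hsymm : ∀ i j, a i j x = a j i x) (ha : ∀ i j, DifferentiableAt ℝ (a i j) x)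
    (hu : Differentiable ℝ u) (hv : Differentiable ℝ v)
    (hu' : ∀ i, DifferentiableAt ℝ (pd i u) x) (hv' : ∀ i, DifferentiableAt ℝ (pd i v) x) :
    divAGrad a (fun y => u y * v y) x
      = u x * divAGrad a v x + v x * divAGrad a u x
        + 2 * (grad u x ⬝ᵥ coeffMatrix a x *ᵥ grad v x) := by
  have hflux : ∀ j, (fun y => ∑ i, a i j y * pd i (fun y => u y * v y) y)
      = fun y => v y * (∑ i, a i j y * pd i u y) + u y * ∑ i, a i j y * pd i v y := fun j => by
    funext y
    simp only [pd_mul _ (hu y) (hv y), Finset.mul_sum, ← Finset.sum_add_distrib]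
    exact Finset.sum_congr rfl fun i _ => by ring
  have hcross : ∀ w₁ w₂ : (Fin n → ℝ) → ℝ,
      ∑ j, pd j w₂ x * ∑ i, a i j x * pd i w₁ x = grad w₁ x ⬝ᵥ coeffMatrix a x *ᵥ grad w₂ x := by
    intro w₁ w₂
    rw [← Matrix.sum_sum_mul_eq_dotProduct_mulVec, Finset.sum_comm]
    simp only [Finset.mul_sum, grad, coeffMatrix, Matrix.of_apply]
    exact Finset.sum_congr rfl fun j _ => Finset.sum_congr rfl fun i _ => by ring
  have hsymm' : grad v x ⬝ᵥ coeffMatrix a x *ᵥ grad u x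
      = grad u x ⬝ᵥ coeffMatrix a x *ᵥ grad v x := by
    rw [← Matrix.sum_sum_mul_eq_dotProduct_mulVec, ← Matrix.sum_sum_mul_eq_dotProduct_mulVec,
      Finset.sum_comm]
    simp only [coeffMatrix, Matrix.of_apply, hsymm]
    exact Finset.sum_congr rfl fun j _ => Finset.sum_congr rfl fun i _ => by ring
  have hpd : ∀ j, pd j (fun y => ∑ i, a i j y * pd i (fun y => u y * v y) y) x
      = pd j v x * (∑ i, a i j x * pd i u x) + v x * pd j (fun y => ∑ i, a i j y * pd i u y) x
        + (pd j u x * (∑ i, a i j x * pd i v x)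
          + u x * pd j (fun y => ∑ i, a i j y * pd i v y) x) := fun j => by
    rw [hflux j, pd_add _ ((hv x).fun_mul (differentiableAt_flux ha hu' j))
      ((hu x).fun_mul (differentiableAt_flux ha hv' j)),
      pd_mul _ (hv x) (differentiableAt_flux ha hu' j),
      pd_mul _ (hu x) (differentiableAt_flux ha hv' j)]
  simp only [divAGrad, hpd, Finset.sum_add_distrib, ← Finset.mul_sum, hcross, hsymm']
  ring

lemma sum_drift_mul_pd (β : Fin n → ℝ) :
    ∑ i, (β i + 2 * ∑ j, a i j x * pd j h x / h x) * pd i u x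
      = β ⬝ᵥ grad u x + 2 * (grad u x ⬝ᵥ coeffMatrix a x *ᵥ grad h x) / h x := by
  rw [← Matrix.sum_sum_mul_eq_dotProduct_mulVec]
  simp only [add_mul, Finset.sum_add_distrib, dotProduct, Finset.mul_sum, Finset.sum_mul,
    Finset.sum_div, coeffMatrix, Matrix.of_apply, grad]
  congr 1
  exact Finset.sum_congr rfl fun i _ => Finset.sum_congr rfl fun j _ => by ring

lemma divAGrad_sq_mul_drift (hsymm : ∀ i j, a i j x = a j i x)
    (ha : ∀ i j, DifferentiableAt ℝ (a i j) x) (hw : ContDiff ℝ 2 w) (hh : ContDiff ℝ 2 h)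
    (hx : h x ≠ 0) (β : Fin n → ℝ) (k : ℝ) :
    -divAGrad a (fun y => w y ^ 2 * h y * k) x
      + ∑ i, (β i + 2 * ∑ j, a i j x * pd j h x / h x) * pd i (fun y => w y ^ 2 * h y * k) x
      = k * (2 * w x * h x * (-divAGrad a w x + β ⬝ᵥ grad w x)
        + w x ^ 2 * (-divAGrad a h x + β ⬝ᵥ grad h x
          + 2 * (grad h x ⬝ᵥ coeffMatrix a x *ᵥ grad h x) / h x)
        - 2 * h x * (grad w x ⬝ᵥ coeffMatrix a x *ᵥ grad w x)) := by
  have hpd : ∀ {u}, ContDiff ℝ 2 u → ∀ i, DifferentiableAt ℝ (pd i u) x :=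
    fun hu i => hu.differentiable_pd le_rfl i x
  have hw1 := hw.differentiable two_ne_zero
  have hh1 := hh.differentiable two_ne_zero
  have hww : ContDiff ℝ 2 (fun y => w y * w y) := hw.mul hw
  have hwwh : ContDiff ℝ 2 (fun y => w y * w y * h y) := hww.mul hh
  have hsq : (fun y => w y ^ 2 * h y * k) = fun y => w y * w y * h y * k := by
    simp only [sq]
  have hdiv : divAGrad a (fun y => w y * w y * h y) x
      = w x * w x * divAGrad a h x
        + h x * (w x * divAGrad a w x + w x * divAGrad a w x
          + 2 * (grad w x ⬝ᵥ coeffMatrix a x *ᵥ grad w x))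
        + 2 * (grad (fun y => w y * w y) x ⬝ᵥ coeffMatrix a x *ᵥ grad h x) := by
    rw [divAGrad_mul hsymm ha (hww.differentiable two_ne_zero) hh1 (hpd hww) (hpd hh),
      divAGrad_mul hsymm ha hw1 hw1 (hpd hw) (hpd hw)]
  have hgradww : grad (fun y => w y * w y) x = (2 * w x) • grad w x := by
    rw [grad_mul (hw1 x) (hw1 x)]
    module
  have hgrad : grad (fun y => w y * w y * h y) x
      = (2 * w x * h x) • grad w x + w x ^ 2 • grad h x := by
    rw [grad_mul ((hww.differentiable two_ne_zero) x) (hh1 x), hgradww]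
    module
  have hpdk : ∀ i, pd i (fun y => w y * w y * h y * k) x = pd i (fun y => w y * w y * h y) x * k :=
    fun i => pd_mul_const i ((hwwh.differentiable two_ne_zero) x) k
  rw [hsq, divAGrad_mul_const ha (hwwh.differentiable two_ne_zero) (hpd hwwh), hdiv]
  simp only [hpdk, ← mul_assoc, ← Finset.sum_mul]
  rw [sum_drift_mul_pd, hgrad, hgradww]
  simp only [dotProduct_add, dotProduct_smul, add_dotProduct, smul_dotProduct, smul_eq_mul]
  field_simp
  ring

lemma sum_bracket_eq_divAGrad (ha : ∀ i j, DifferentiableAt ℝ (a i j) x)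
    (hh : ∀ i, DifferentiableAt ℝ (pd i h) x) :
    ∑ i, ∑ j, (-(a i j x) * pd j (pd i h) x / h x - pd j (a i j) x * pd i h x / h x
        + 2 * a i j x * pd i h x * pd j h x / (h x) ^ 2)
      = (-divAGrad a h x + 2 * (grad h x ⬝ᵥ coeffMatrix a x *ᵥ grad h x) / h x) / h x := by
  rw [divAGrad_eq_sum ha hh, ← Matrix.sum_sum_mul_eq_dotProduct_mulVec]
  simp only [coeffMatrix, Matrix.of_apply, grad, Finset.sum_div, Finset.mul_sum,
    ← Finset.sum_neg_distrib, ← Finset.sum_add_distrib]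
  refine Finset.sum_congr rfl fun i _ => Finset.sum_congr rfl fun j _ => ?_
  ring

end DivergenceForm

lemma hasDerivAt_sq_mul_const_mul {u f : ℝ → ℝ} {u' f' t : ℝ} (hu : HasDerivAt u u' t)
    (k : ℝ) (hf : HasDerivAt f f' t) :
    HasDerivAt (fun s => u s ^ 2 * k * f s) (2 * u t * u' * k * f t + u t ^ 2 * k * f') t :=
  (((hu.fun_pow 2).mul_const k).fun_mul hf).congr_deriv (by norm_num)

lemma weighted_sq_estimate {w wt D bw ΔF c cn C Q R f f' g : ℝ} (hg : 0 < g) (hf : 0 < f)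
    (hpde : wt - D + bw + c * w = ΔF) (hΔF : |ΔF| ≤ C * |w|) (hc : |c| ≤ cn) (hQ : 0 ≤ Q) :
    2 * w * wt * g * f + w ^ 2 * g * f' + f * (2 * w * g * (-D + bw) + w ^ 2 * R - 2 * g * Q)
      ≤ w ^ 2 * ((R / g + f' / f + 2 * (C + cn)) * f * g) := by
  have hlip : w * ΔF ≤ C * w ^ 2 :=
    calc w * ΔF ≤ |w| * |ΔF| := by rw [← abs_mul]; exact le_abs_self _
      _ ≤ |w| * (C * |w|) := by gcongr
      _ = C * w ^ 2 := by rw [← sq_abs w]; ring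
  have hcw : -(c * w ^ 2) ≤ cn * w ^ 2 := by
    nlinarith [neg_abs_le c, sq_nonneg w]
  have hgap : w ^ 2 * ((R / g + f' / f + 2 * (C + cn)) * f * g)
      - (2 * w * wt * g * f + w ^ 2 * g * f' + f * (2 * w * g * (-D + bw) + w ^ 2 * R - 2 * g * Q))
      = 2 * f * g * ((C * w ^ 2 - w * ΔF) + (cn * w ^ 2 + c * w ^ 2) + Q) := by
    rw [← hpde]
    field_simp
    ring
  have hgap_nonneg : 0 ≤ 2 * f * g * ((C * w ^ 2 - w * ΔF) + (cn * w ^ 2 + c * w ^ 2) + Q) :=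
    mul_nonneg (by positivity) (by linarith)
  linarith

lemma divAGrad_weighted_sq_le {n : ℕ} {a : Fin n → Fin n → (Fin n → ℝ) → ℝ} {β : Fin n → ℝ}
    {w g : (Fin n → ℝ) → ℝ} {x : Fin n → ℝ} {wt ΔF c cn C f f' : ℝ}
    (hsymm : ∀ i j, a i j x = a j i x) (ha : ∀ i j, DifferentiableAt ℝ (a i j) x)
    (hw : ContDiff ℝ 2 w) (hg : ContDiff ℝ 2 g) (hgx : 0 < g x) (hf : 0 < f)
    (hell : 0 ≤ grad w x ⬝ᵥ coeffMatrix a x *ᵥ grad w x)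
    (hpde : wt - divAGrad a w x + β ⬝ᵥ grad w x + c * w x = ΔF) (hΔF : |ΔF| ≤ C * |w x|)
    (hc : |c| ≤ cn) :
    2 * w x * wt * g x * f + w x ^ 2 * g x * f' - divAGrad a (fun y => w y ^ 2 * g y * f) x
      + ∑ i, (β i + 2 * ∑ j, a i j x * pd j g x / g x) * pd i (fun y => w y ^ 2 * g y * f) x
      ≤ w x ^ 2 * (((-divAGrad a g x + β ⬝ᵥ grad g x
          + 2 * (grad g x ⬝ᵥ coeffMatrix a x *ᵥ grad g x) / g x) / g x
        + f' / f + 2 * (C + cn)) * f * g x) := by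
  have hspace := divAGrad_sq_mul_drift hsymm ha hw hg hgx.ne' β f
  have hest := weighted_sq_estimate (f' := f') (R := -divAGrad a g x + β ⬝ᵥ grad g x
    + 2 * (grad g x ⬝ᵥ coeffMatrix a x *ᵥ grad g x) / g x) hgx hf hpde hΔF hc hell
  linarith

theorem lemma21_pointwise_general (n : ℕ) (Ω' : Set (Fin n → ℝ))
    (a : Fin n → Fin n → (Fin n → ℝ) → ℝ) (b : Fin n → (Fin n → ℝ) → ℝ)
    (c : (Fin n → ℝ) → ℝ)
    (ha : ∀ i j, ContDiff ℝ 2 (a i j))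
    (hsymm : ∀ i j x, a i j x = a j i x)
    (lam : ℝ) (hlam : 0 < lam)
    (hell : ∀ x ξ : Fin n → ℝ, lam * ∑ i, ξ i ^ 2 ≤ ∑ i, ∑ j, a i j x * ξ i * ξ j)
    (cnorm : ℝ) (hcB : BddAbove (Set.range fun x => |c x|))
    (hcnorm : cnorm = ⨆ x, |c x|)
    (F : (Fin n → ℝ) → ℝ → ℝ → ℝ) (C : ℝ)
    (hF : ∀ x t z z', |F x t z - F x t z'| ≤ C * |z - z'|)
    (u₁ u₂ : (Fin n → ℝ) → ℝ → ℝ)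
    (hu₁x : ∀ t, ContDiff ℝ 2 (fun x => u₁ x t))
    (hu₂x : ∀ t, ContDiff ℝ 2 (fun x => u₂ x t))
    (hu₁t : ∀ x, Differentiable ℝ (u₁ x)) (hu₂t : ∀ x, Differentiable ℝ (u₂ x))
    (e : (Fin n → ℝ) → ℝ → ℝ) (he : e = fun x t => u₁ x t - u₂ x t)
    (heq : ∀ x ∈ Ω', ∀ t > (0:ℝ),
      deriv (e x) t
        - (∑ j, pd j (fun y => ∑ i, a i j y * pd i (fun z => e z t) y) x)
        + (∑ i, b i x * pd i (fun z => e z t) x) + c x * e x t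
      = F x t (u₁ x t) - F x t (u₂ x t))
    (g : (Fin n → ℝ) → ℝ) (hg : ContDiff ℝ 2 g)
    (hgpos : ∀ x, 0 < g x)
    (f : ℝ → ℝ) (hf : ∀ t > (0:ℝ), DifferentiableAt ℝ f t)
    (hfpos : ∀ t > (0:ℝ), 0 < f t)
    (Φ : (Fin n → ℝ) → ℝ → ℝ) (hΦ : Φ = fun x t => (e x t) ^ 2 * g x * f t)
    (ci : Fin n → (Fin n → ℝ) → ℝ)
    (hci : ∀ i x, ci i x = b i x + 2 * ∑ j, a i j x * pd j g x / g x)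
    (Mc : (Fin n → ℝ) → ℝ → ℝ)
    (hMc : ∀ x t, Mc x t =
      ((∑ i, ∑ j, (-(a i j x) * pd j (pd i g) x / g x
          - pd j (a i j) x * pd i g x / g x
          + 2 * a i j x * pd i g x * pd j g x / (g x) ^ 2))
        + deriv f t / f t + 2 * (C + cnorm)
        + ∑ i, b i x * pd i g x / g x) * f t * g x) :
    (∀ x ∈ Ω', ∀ t > (0:ℝ),
      deriv (Φ x) t
        - (∑ j, pd j (fun y => ∑ i, a i j y * pd i (fun z => Φ z t) y) x)
        + ∑ i, ci i x * pd i (fun z => Φ z t) x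
      ≤ (e x t) ^ 2 * Mc x t) ∧
    ((∀ x ∈ Ω', ∀ t > (0:ℝ),
        deriv f t / f t
          + (∑ i, ∑ j, (-(a i j x) * pd j (pd i g) x / g x
              - pd j (a i j) x * pd i g x / g x
              + 2 * a i j x * pd i g x * pd j g x / (g x) ^ 2))
          + 2 * (C + cnorm) + ∑ i, b i x * pd i g x / g x ≤ 0) →
      ∀ x ∈ Ω', ∀ t > (0:ℝ),
        deriv (Φ x) t
          - (∑ j, pd j (fun y => ∑ i, a i j y * pd i (fun z => Φ z t) y) x)
          + ∑ i, ci i x * pd i (fun z => Φ z t) x ≤ 0) := by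
  have ha' : ∀ i j x, DifferentiableAt ℝ (a i j) x :=
    fun i j x => (ha i j).differentiable two_ne_zero x
  have hMc' : ∀ x t, Mc x t = ((-divAGrad a g x + (fun i => b i x) ⬝ᵥ grad g x
      + 2 * (grad g x ⬝ᵥ coeffMatrix a x *ᵥ grad g x) / g x) / g x
        + deriv f t / f t + 2 * (C + cnorm)) * f t * g x := fun x t => by
    rw [hMc, sum_bracket_eq_divAGrad (ha' · · x) fun i => (hg.differentiable_pd le_rfl i) x,
      ← Finset.sum_div]
    simp only [dotProduct, grad]
    ring
  have main : ∀ x ∈ Ω', ∀ t > (0:ℝ),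
      deriv (Φ x) t
        - (∑ j, pd j (fun y => ∑ i, a i j y * pd i (fun z => Φ z t) y) x)
        + ∑ i, ci i x * pd i (fun z => Φ z t) x
      ≤ (e x t) ^ 2 * Mc x t := by
    intro x hx t ht
    have hex : DifferentiableAt ℝ (e x) t := by subst he; exact ((hu₁t x).sub (hu₂t x)) t
    have hw : ContDiff ℝ 2 (fun z => e z t) := by subst he; exact (hu₁x t).sub (hu₂x t)
    have hell' : 0 ≤ grad (fun z => e z t) x ⬝ᵥ coeffMatrix a x *ᵥ grad (fun z => e z t) x := by
      rw [← Matrix.sum_sum_mul_eq_dotProduct_mulVec]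
      exact le_trans (by positivity) (hell x _)
    have hΔF : |F x t (u₁ x t) - F x t (u₂ x t)| ≤ C * |e x t| := by
      subst he; exact hF x t _ _
    subst hΦ
    rw [(hasDerivAt_sq_mul_const_mul hex.hasDerivAt (g x) (hf t ht).hasDerivAt).deriv, hMc' x t]
    simp only [hci]
    exact divAGrad_weighted_sq_le (hsymm · · x) (ha' · · x) hw hg (hgpos x) (hfpos t ht) hell'
      (heq x hx t ht) hΔF (hcnorm ▸ le_ciSup hcB x)
  refine ⟨main, fun hM x hx t ht => (main x hx t ht).trans ?_⟩
  rw [hMc]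
  have hfg : 0 < f t * g x := mul_pos (hfpos t ht) (hgpos x)
  nlinarith [hM x hx t ht, mul_nonneg (sq_nonneg (e x t)) hfg.le]

/-- (Lemma 2.1, pointwise form) If `e = u₁ − u₂` is a bounded `C^{2,1}` solution of
`∂_t e − Σ ∂_j(a_{ij} ∂_i e) + Σ b_i ∂_i e + c e = F(x,t,u₁) − F(x,t,u₂)` in
`Ω'×(0,∞)`, `g, f` are strictly positive and bounded, `Φ = e² g f`,
`c_i = b_i + 2 Σ_j a_{ij} (∂_j g)/g` and `𝔐` is the stated quantity, then pointwise
`∂_t Φ − Σ ∂_j(a_{ij} ∂_i Φ) + Σ c_i ∂_i Φ ≤ e² 𝔐`; in particular, if the bracket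
in `𝔐` is nonpositive, then `∂_t Φ − Σ ∂_j(a_{ij} ∂_i Φ) + Σ c_i ∂_i Φ ≤ 0`. -/
theorem lemma21_pointwise (n : ℕ) (Ω' : Set (Fin n → ℝ))
    (hΩo : IsOpen Ω') (hΩb : Bornology.IsBounded Ω')
    (a : Fin n → Fin n → (Fin n → ℝ) → ℝ) (b : Fin n → (Fin n → ℝ) → ℝ)
    (c : (Fin n → ℝ) → ℝ)
    (ha : ∀ i j, ContDiff ℝ 2 (a i j)) (hb : ∀ i, ContDiff ℝ 2 (b i))
    (hc : ContDiff ℝ 2 c)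
    (hsymm : ∀ i j x, a i j x = a j i x)
    (lam Lam : ℝ) (hlam : 0 < lam) (hlL : lam ≤ Lam)
    (hell : ∀ x ξ : Fin n → ℝ, lam * ∑ i, ξ i ^ 2 ≤ ∑ i, ∑ j, a i j x * ξ i * ξ j)
    (haB : ∀ i j x, |a i j x| ≤ Lam)
    (cnorm : ℝ) (hcB : BddAbove (Set.range fun x => |c x|))
    (hcnorm : cnorm = ⨆ x, |c x|)
    (F : (Fin n → ℝ) → ℝ → ℝ → ℝ) (C : ℝ) (hC : 0 < C)
    (hF : ∀ x t z z', |F x t z - F x t z'| ≤ C * |z - z'|)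
    (u₁ u₂ : (Fin n → ℝ) → ℝ → ℝ)
    (hu₁x : ∀ t, ContDiff ℝ 2 (fun x => u₁ x t))
    (hu₂x : ∀ t, ContDiff ℝ 2 (fun x => u₂ x t))
    (hu₁t : ∀ x, Differentiable ℝ (u₁ x)) (hu₂t : ∀ x, Differentiable ℝ (u₂ x))
    (e : (Fin n → ℝ) → ℝ → ℝ) (he : e = fun x t => u₁ x t - u₂ x t)
    (heB : ∃ M, ∀ x t, |e x t| ≤ M)
    (heq : ∀ x ∈ Ω', ∀ t > (0:ℝ),
      deriv (e x) t
        - (∑ j, pd j (fun y => ∑ i, a i j y * pd i (fun z => e z t) y) x)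
        + (∑ i, b i x * pd i (fun z => e z t) x) + c x * e x t
      = F x t (u₁ x t) - F x t (u₂ x t))
    (g : (Fin n → ℝ) → ℝ) (hg : ContDiff ℝ 2 g)
    (hgpos : ∀ x, 0 < g x) (hgB : ∃ M, ∀ x, g x ≤ M)
    (f : ℝ → ℝ) (hf : ∀ t > (0:ℝ), DifferentiableAt ℝ f t)
    (hfpos : ∀ t > (0:ℝ), 0 < f t) (hfB : ∃ M, ∀ t > (0:ℝ), f t ≤ M)
    (Φ : (Fin n → ℝ) → ℝ → ℝ) (hΦ : Φ = fun x t => (e x t) ^ 2 * g x * f t)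
    (ci : Fin n → (Fin n → ℝ) → ℝ)
    (hci : ∀ i x, ci i x = b i x + 2 * ∑ j, a i j x * pd j g x / g x)
    (Mc : (Fin n → ℝ) → ℝ → ℝ)
    (hMc : ∀ x t, Mc x t =
      ((∑ i, ∑ j, (-(a i j x) * pd j (pd i g) x / g x
          - pd j (a i j) x * pd i g x / g x
          + 2 * a i j x * pd i g x * pd j g x / (g x) ^ 2))
        + deriv f t / f t + 2 * (C + cnorm)
        + ∑ i, b i x * pd i g x / g x) * f t * g x) :
    (∀ x ∈ Ω', ∀ t > (0:ℝ),
      deriv (Φ x) t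
        - (∑ j, pd j (fun y => ∑ i, a i j y * pd i (fun z => Φ z t) y) x)
        + ∑ i, ci i x * pd i (fun z => Φ z t) x
      ≤ (e x t) ^ 2 * Mc x t) ∧
    ((∀ x ∈ Ω', ∀ t > (0:ℝ),
        deriv f t / f t
          + (∑ i, ∑ j, (-(a i j x) * pd j (pd i g) x / g x
              - pd j (a i j) x * pd i g x / g x
              + 2 * a i j x * pd i g x * pd j g x / (g x) ^ 2))
          + 2 * (C + cnorm) + ∑ i, b i x * pd i g x / g x ≤ 0) →
      ∀ x ∈ Ω', ∀ t > (0:ℝ),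
        deriv (Φ x) t
          - (∑ j, pd j (fun y => ∑ i, a i j y * pd i (fun z => Φ z t) y) x)
          + ∑ i, ci i x * pd i (fun z => Φ z t) x ≤ 0) :=
  lemma21_pointwise_general n Ω' a b c ha hsymm lam hlam hell cnorm hcB hcnorm F C hF u₁ u₂ hu₁x
    hu₂x hu₁t hu₂t e he heq g hg hgpos f hf hfpos Φ hΦ ci hci Mc hMc
end

section
/- For every α > 0, the map f ↦ |f|_α is a norm on L²(0,∞); that is, |f|_α is finite for every f ∈ L²(0,∞), |f|_α = 0 if and only if f = 0 almost everywhere, |λf|_α = |λ| |f|_α for every scalar λ, and |f + h|_α ≤ |f|_α + |h|_α. -/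
/-!
For `y ≥ α` the Laplace transform `Lf` of `f ∈ L²(0,∞)` is bounded by `∫ |f(t)| e^{-αt} dt < ∞`
(Cauchy–Schwarz) and continuous in `y` (dominated convergence), so every window
`(∫_a^{a+1} (Lf)²)^{1/2}` is finite and bounded uniformly in `a > α`. Homogeneity and the
triangle inequality hold window by window, the latter being Minkowski's inequality in
`L²(a, a+1)`. If `|f|_α = 0`, continuity makes `Lf` vanish on `(α,∞)`. Substituting
`x = e^{-t}`, the values `Lf(n+1+k)` are the moments of the integrable function
`x ↦ xⁿ f(-log x)` on `(0,1)`, which therefore vanishes a.e. by the Weierstrass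
approximation theorem; hence `f = 0` a.e.
-/

open MeasureTheory Real Set

/-- The Laplace-type transform `∫_0^∞ h(t) e^{-yt} dt`. -/
noncomputable def lapT (h : ℝ → ℝ) (y : ℝ) : ℝ :=
  ∫ t in Set.Ioi (0:ℝ), h t * Real.exp (-(y * t))

/-- `|h|_α = sup_{α' > α} ( ∫_{α'}^{α'+1} ( ∫_0^∞ h(t) e^{−yt} dt )² dy )^{1/2}`. -/
noncomputable def lnorm (α : ℝ) (h : ℝ → ℝ) : ℝ :=
  ⨆ α' : Set.Ioi α, Real.sqrt (∫ y in (α' : ℝ)..(α' : ℝ) + 1, (lapT h y) ^ 2)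

theorem ae_eq_zero_of_forall_integral_pow_mul_eq_zero {μ : Measure ℝ} {s : Set ℝ} {H : ℝ → ℝ}
    (hs : MeasurableSet s) (hs_bdd : Bornology.IsBounded s) (hH : IntegrableOn H s μ)
    (hmom : ∀ k : ℕ, ∫ x in s, x ^ k * H x ∂μ = 0) : H =ᵐ[μ.restrict s] 0 := by
  have hint : ∀ φ : ℝ → ℝ, Continuous φ → IntegrableOn (fun x => φ x * H x) s μ := fun φ hφ =>
    hH.continuousOn_mul_of_subset hφ.continuousOn isCompact_Icc hs hs_bdd.subset_Icc_sInf_sSup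
  have hpoly : ∀ p : Polynomial ℝ, ∫ x in s, p.eval x * H x ∂μ = 0 := by
    intro p
    induction p using Polynomial.induction_on' with
    | add p q hp hq =>
      simp only [Polynomial.eval_add, add_mul]
      rw [integral_add (hint _ p.continuous) (hint _ q.continuous), hp, hq, add_zero]
    | monomial k c =>
      simp only [Polynomial.eval_monomial, mul_assoc]
      rw [integral_const_mul, hmom, mul_zero]
  -- Weierstrass: `∫ φ H` is within `ε ∫ |H|` of some `∫ p H = 0`.
  have hcont : ∀ φ : ℝ → ℝ, Continuous φ → ∫ x in s, φ x * H x ∂μ = 0 := by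
    intro φ hφ
    set C := ∫ x in s, |H x| ∂μ
    have hC : 0 ≤ C := integral_nonneg fun x => abs_nonneg _
    have key : ∀ ε > 0, |∫ x in s, φ x * H x ∂μ| ≤ ε * C := by
      intro ε hε
      obtain ⟨p, hp⟩ := exists_polynomial_near_of_continuousOn _ _ φ hφ.continuousOn ε hε
      have hsub : ∫ x in s, φ x * H x ∂μ = ∫ x in s, (φ x - p.eval x) * H x ∂μ := by
        simp only [sub_mul]
        rw [integral_sub (hint _ hφ) (hint _ p.continuous), hpoly, sub_zero]
      rw [hsub, ← Real.norm_eq_abs, ← integral_const_mul]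
      refine norm_integral_le_of_norm_le (hH.abs.const_mul ε) ?_
      refine ae_restrict_of_forall_mem hs fun x hx => ?_
      rw [norm_mul, Real.norm_eq_abs, Real.norm_eq_abs, abs_sub_comm]
      exact mul_le_mul_of_nonneg_right (hp x (hs_bdd.subset_Icc_sInf_sSup hx)).le (abs_nonneg _)
    refine abs_nonpos_iff.1 (le_of_forall_pos_le_add fun δ hδ => ?_)
    calc |∫ x in s, φ x * H x ∂μ| ≤ δ / (C + 1) * C := key _ (by positivity)
      _ ≤ 0 + δ := by
        rw [zero_add, div_mul_eq_mul_div, div_le_iff₀ (by positivity)]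
        nlinarith
  exact ae_eq_zero_of_integral_contDiff_smul_eq_zero hH.integrable.locallyIntegrable
    fun g hg _ => hcont g hg.continuous

theorem image_exp_neg_Ioi : (fun t => exp (-t)) '' Ioi 0 = Ioo 0 1 := by
  ext x
  constructor
  · rintro ⟨t, ht, rfl⟩
    exact ⟨exp_pos _, exp_lt_one_iff.2 (neg_lt_zero.2 ht)⟩
  · rintro ⟨hx0, hx1⟩
    exact ⟨-log x, neg_pos.2 (log_neg hx0 hx1), by simp [exp_log hx0]⟩

theorem integral_Ioo_zero_one_eq_integral_Ioi (G : ℝ → ℝ) :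
    ∫ x in Ioo 0 1, G x = ∫ t in Ioi 0, exp (-t) * G (exp (-t)) := by
  rw [← image_exp_neg_Ioi, integral_image_eq_integral_abs_deriv_smul measurableSet_Ioi
    (fun t _ => (hasDerivAt_neg t).exp.hasDerivWithinAt) (exp_injective.comp neg_injective).injOn]
  simp [abs_of_pos (exp_pos _)]

theorem integrableOn_Ioo_zero_one_iff (G : ℝ → ℝ) :
    IntegrableOn G (Ioo 0 1) ↔ IntegrableOn (fun t => exp (-t) * G (exp (-t))) (Ioi 0) := by
  rw [← image_exp_neg_Ioi, integrableOn_image_iff_integrableOn_abs_deriv_smul measurableSet_Ioi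
    (fun t _ => (hasDerivAt_neg t).exp.hasDerivWithinAt) (exp_injective.comp neg_injective).injOn]
  simp [abs_of_pos (exp_pos _)]

theorem exp_neg_mul_pow_mul_comp_neg_log (g : ℝ → ℝ) (m : ℕ) (t : ℝ) :
    exp (-t) * (exp (-t) ^ m * g (-log (exp (-t)))) = g t * exp (-((m + 1) * t)) := by
  rw [log_exp, neg_neg, ← exp_nat_mul, show -((m + 1) * t) = m * -t + -t by ring, exp_add]
  ring

theorem integral_Ioo_pow_mul_comp_neg_log (g : ℝ → ℝ) (m : ℕ) :
    ∫ x in Ioo 0 1, x ^ m * g (-log x) = lapT g (m + 1) := by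
  simp only [integral_Ioo_zero_one_eq_integral_Ioi, exp_neg_mul_pow_mul_comp_neg_log, lapT]

theorem integrableOn_Ioo_pow_mul_comp_neg_log_iff (g : ℝ → ℝ) (m : ℕ) :
    IntegrableOn (fun x => x ^ m * g (-log x)) (Ioo 0 1) ↔
      IntegrableOn (fun t => g t * exp (-((m + 1) * t))) (Ioi 0) := by
  simp only [integrableOn_Ioo_zero_one_iff, exp_neg_mul_pow_mul_comp_neg_log]

section LaplaceTransform

variable {f g : ℝ → ℝ} {c y : ℝ}

theorem abs_mul_exp_neg_le (x : ℝ) {t : ℝ} (ht : 0 ≤ t) (hcy : c ≤ y) :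
    |x * exp (-(y * t))| ≤ |x * exp (-(c * t))| := by
  simp only [abs_mul, abs_exp]
  gcongr

theorem MeasureTheory.IntegrableOn.mul_exp_neg_of_le
    (hg : IntegrableOn (fun t => g t * exp (-(c * t))) (Ioi 0)) (hcy : c ≤ y) :
    IntegrableOn (fun t => g t * exp (-(y * t))) (Ioi 0) := by
  have hbdd : ∀ᵐ t ∂volume.restrict (Ioi (0 : ℝ)), ‖exp (-((y - c) * t))‖ ≤ 1 :=
    ae_restrict_of_forall_mem measurableSet_Ioi fun t (ht : 0 < t) => by
      rw [norm_of_nonneg (exp_pos _).le, exp_le_one_iff, neg_nonpos]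
      exact mul_nonneg (sub_nonneg.2 hcy) ht.le
  refine IntegrableOn.congr_fun (hg.mul_bdd (by fun_prop) hbdd) (fun t _ => ?_) measurableSet_Ioi
  rw [mul_assoc, ← exp_add]
  ring_nf

theorem abs_lapT_le (hg : IntegrableOn (fun t => g t * exp (-(c * t))) (Ioi 0)) (hcy : c ≤ y) :
    |lapT g y| ≤ ∫ t in Ioi 0, |g t * exp (-(c * t))| := by
  rw [← Real.norm_eq_abs]
  exact norm_integral_le_of_norm_le hg.abs <| ae_restrict_of_forall_mem measurableSet_Ioi
    fun t (ht : 0 < t) => abs_mul_exp_neg_le (g t) ht.le hcy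

theorem continuousOn_lapT (hg : IntegrableOn (fun t => g t * exp (-(c * t))) (Ioi 0)) :
    ContinuousOn (lapT g) (Ioi c) :=
  continuousOn_of_dominated (fun y hy => (hg.mul_exp_neg_of_le (le_of_lt hy)).1)
    (fun y hy => ae_restrict_of_forall_mem measurableSet_Ioi
      fun t (ht : 0 < t) => abs_mul_exp_neg_le (g t) ht.le (le_of_lt hy))
    hg.abs (ae_of_all _ fun t => by fun_prop)

theorem lapT_add (hf : IntegrableOn (fun t => f t * exp (-(y * t))) (Ioi 0))
    (hg : IntegrableOn (fun t => g t * exp (-(y * t))) (Ioi 0)) :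
    lapT (fun t => f t + g t) y = lapT f y + lapT g y := by
  simp only [lapT, add_mul]
  exact integral_add hf hg

theorem lapT_const_mul (lam : ℝ) (f : ℝ → ℝ) (y : ℝ) :
    lapT (fun t => lam * f t) y = lam * lapT f y := by
  simp only [lapT, mul_assoc]
  exact integral_const_mul lam _

theorem lapT_eq_zero_of_ae_eq_zero (hf : f =ᵐ[volume.restrict (Ioi 0)] 0) (y : ℝ) :
    lapT f y = 0 :=
  integral_eq_zero_of_ae (by filter_upwards [hf] with t ht; simp [ht])

theorem ae_eq_zero_of_lapT_eq_zero (hg : IntegrableOn (fun t => g t * exp (-(c * t))) (Ioi 0))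
    (h0 : ∀ y, c < y → lapT g y = 0) : g =ᵐ[volume.restrict (Ioi 0)] 0 := by
  obtain ⟨n, hn⟩ := exists_nat_gt c
  have hgn : IntegrableOn (fun t => g t * exp (-((n + 1) * t))) (Ioi 0) :=
    hg.mul_exp_neg_of_le (by linarith)
  have hH : (fun x => x ^ n * g (-log x)) =ᵐ[volume.restrict (Ioo 0 1)] 0 := by
    refine ae_eq_zero_of_forall_integral_pow_mul_eq_zero measurableSet_Ioo
      (Metric.isBounded_Ioo 0 1) ((integrableOn_Ioo_pow_mul_comp_neg_log_iff g n).2 hgn) fun k => ?_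
    simp_rw [← mul_assoc, ← pow_add]
    rw [integral_Ioo_pow_mul_comp_neg_log]
    exact h0 _ (by push_cast; linarith)
  have hint : ∫ t in Ioi 0, |g t| * exp (-((n + 1) * t)) = 0 := by
    rw [← lapT, ← integral_Ioo_pow_mul_comp_neg_log]
    refine integral_eq_zero_of_ae ?_
    filter_upwards [hH] with x hx
    rcases mul_eq_zero.1 hx with h | h <;> simp [h]
  have hint' := (integral_eq_zero_iff_of_nonneg (fun t => by positivity)
    (IntegrableOn.congr_fun hgn.abs (fun t _ => by simp [abs_mul]) measurableSet_Ioi)).1 hint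
  filter_upwards [hint'] with t ht
  simpa [(exp_pos _).ne'] using ht

end LaplaceTransform

theorem sqrt_integral_sq_eq_norm_toLp {X : Type*} [MeasurableSpace X] {μ : Measure X}
    {F : X → ℝ} (hF : MemLp F 2 μ) : √(∫ x, F x ^ 2 ∂μ) = ‖hF.toLp F‖ := by
  rw [← sqrt_sq (norm_nonneg (hF.toLp F)), ← real_inner_self_eq_norm_sq, L2.inner_def]
  congr 1
  refine integral_congr_ae ?_
  filter_upwards [hF.coeFn_toLp] with x hx
  simp [hx, sq]

theorem sqrt_integral_add_sq_le {X : Type*} [MeasurableSpace X] {μ : Measure X} {F G : X → ℝ}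
    (hF : MemLp F 2 μ) (hG : MemLp G 2 μ) :
    √(∫ x, (F x + G x) ^ 2 ∂μ) ≤ √(∫ x, F x ^ 2 ∂μ) + √(∫ x, G x ^ 2 ∂μ) := by
  have hFG := sqrt_integral_sq_eq_norm_toLp (hF.add hG)
  simp only [Pi.add_apply] at hFG
  rw [hFG, sqrt_integral_sq_eq_norm_toLp hF, sqrt_integral_sq_eq_norm_toLp hG, MemLp.toLp_add]
  exact norm_add_le _ _

theorem sqrt_intervalIntegral_add_sq_le {F G : ℝ → ℝ} {a b : ℝ} (hab : a ≤ b)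
    (hF : ContinuousOn F (Icc a b)) (hG : ContinuousOn G (Icc a b)) :
    √(∫ y in a..b, (F y + G y) ^ 2) ≤ √(∫ y in a..b, F y ^ 2) + √(∫ y in a..b, G y ^ 2) := by
  have hmem : ∀ F : ℝ → ℝ, ContinuousOn F (Icc a b) → MemLp F 2 (volume.restrict (Ioc a b)) :=
    fun F hF => (memLp_two_iff_integrable_sq
      ((hF.mono Ioc_subset_Icc_self).aestronglyMeasurable measurableSet_Ioc)).2
      (((hF.pow 2).integrableOn_compact isCompact_Icc).mono_set Ioc_subset_Icc_self)
  simp only [intervalIntegral.integral_of_le hab]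
  exact sqrt_integral_add_sq_le (hmem F hF) (hmem G hG)

theorem memLp_exp_neg_mul_Ioi {c : ℝ} (hc : 0 < c) :
    MemLp (fun t => exp (-(c * t))) 2 (volume.restrict (Ioi 0)) := by
  refine (memLp_two_iff_integrable_sq (by fun_prop)).2 ?_
  simp_rw [← exp_nat_mul]
  refine (exp_neg_integrableOn_Ioi 0 (by positivity : 0 < 2 * c)).congr_fun (fun t _ => ?_)
    measurableSet_Ioi
  push_cast
  ring_nf

theorem MeasureTheory.MemLp.integrableOn_mul_exp_neg {f : ℝ → ℝ} {c : ℝ}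
    (hf : MemLp f 2 (volume.restrict (Ioi 0))) (hc : 0 < c) :
    IntegrableOn (fun t => f t * exp (-(c * t))) (Ioi 0) :=
  hf.integrable_mul (memLp_exp_neg_mul_Ioi hc)

noncomputable def windowNorm (f : ℝ → ℝ) (a : ℝ) : ℝ :=
  √(∫ y in a..a + 1, lapT f y ^ 2)

theorem lnorm_eq_iSup_windowNorm (α : ℝ) (f : ℝ → ℝ) :
    lnorm α f = ⨆ a : Ioi α, windowNorm f a :=
  rfl

section WindowNorm

variable {f g : ℝ → ℝ} {c a : ℝ}

theorem windowNorm_le (hf : IntegrableOn (fun t => f t * exp (-(c * t))) (Ioi 0)) (hca : c ≤ a) :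
    windowNorm f a ≤ ∫ t in Ioi 0, |f t * exp (-(c * t))| := by
  set B := ∫ t in Ioi 0, |f t * exp (-(c * t))|
  have hB : 0 ≤ B := integral_nonneg fun t => abs_nonneg _
  have hsq : ‖∫ y in a..a + 1, lapT f y ^ 2‖ ≤ B ^ 2 * |a + 1 - a| :=
    intervalIntegral.norm_integral_le_of_norm_le_const fun y hy => by
      rw [uIoc_of_le (by linarith)] at hy
      rw [norm_pow, Real.norm_eq_abs]
      exact pow_le_pow_left₀ (abs_nonneg _) (abs_lapT_le hf (hca.trans hy.1.le)) 2
  refine (sqrt_le_left hB).2 ((le_abs_self _).trans (hsq.trans_eq ?_))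
  simp

theorem windowNorm_const_mul (lam : ℝ) (f : ℝ → ℝ) (a : ℝ) :
    windowNorm (fun t => lam * f t) a = |lam| * windowNorm f a := by
  simp only [windowNorm, lapT_const_mul, mul_pow, intervalIntegral.integral_const_mul,
    sqrt_mul (sq_nonneg lam), sqrt_sq_eq_abs]

theorem windowNorm_add_le (hf : IntegrableOn (fun t => f t * exp (-(c * t))) (Ioi 0))
    (hg : IntegrableOn (fun t => g t * exp (-(c * t))) (Ioi 0)) (hca : c < a) :
    windowNorm (fun t => f t + g t) a ≤ windowNorm f a + windowNorm g a := by
  have hIcc : Icc a (a + 1) ⊆ Ioi c := fun y hy => hca.trans_le hy.1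
  have hadd : EqOn (fun y => lapT (fun t => f t + g t) y ^ 2) (fun y => (lapT f y + lapT g y) ^ 2)
      (uIcc a (a + 1)) := fun y hy => by
    rw [uIcc_of_le (by linarith)] at hy
    have hcy : c ≤ y := (hIcc hy).le
    simp only [lapT_add (hf.mul_exp_neg_of_le hcy) (hg.mul_exp_neg_of_le hcy)]
  rw [windowNorm, intervalIntegral.integral_congr hadd]
  exact sqrt_intervalIntegral_add_sq_le (by linarith) ((continuousOn_lapT hf).mono hIcc)
    ((continuousOn_lapT hg).mono hIcc)

theorem lapT_eq_zero_of_forall_windowNorm_eq_zero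
    (hf : IntegrableOn (fun t => f t * exp (-(c * t))) (Ioi 0))
    (h0 : ∀ a, c < a → windowNorm f a = 0) : ∀ y, c < y → lapT f y = 0 := by
  intro y hcy
  set a := max ((c + y) / 2) (y - 1)
  have hca : c < a := lt_max_of_lt_left (by linarith)
  have hay : a ≤ y := max_le (by linarith) (by linarith)
  have hya : y ≤ a + 1 := by linarith [le_max_right ((c + y) / 2) (y - 1)]
  by_contra hne
  have hpos : 0 < ∫ z in a..a + 1, lapT f z ^ 2 :=
    intervalIntegral.integral_pos (by linarith)
      (((continuousOn_lapT hf).mono fun z hz => hca.trans_le hz.1).pow 2)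
      (fun z _ => sq_nonneg _)
      ⟨y, ⟨hay, hya⟩, lt_of_le_of_ne (sq_nonneg _) (pow_ne_zero 2 hne).symm⟩
  have hwin := h0 a hca
  rw [windowNorm, sqrt_eq_zero'] at hwin
  linarith

end WindowNorm

section LNorm

variable {α : ℝ} {f g : ℝ → ℝ}

theorem bddAbove_range_windowNorm (hf : IntegrableOn (fun t => f t * exp (-(α * t))) (Ioi 0)) :
    BddAbove (range fun a : Ioi α => windowNorm f a) :=
  ⟨_, forall_mem_range.2 fun a => windowNorm_le hf (le_of_lt a.2)⟩

theorem lnorm_eq_zero_iff (hf : IntegrableOn (fun t => f t * exp (-(α * t))) (Ioi 0)) :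
    lnorm α f = 0 ↔ f =ᵐ[volume.restrict (Ioi 0)] 0 := by
  refine ⟨fun h => ae_eq_zero_of_lapT_eq_zero hf ?_, fun h => ?_⟩
  · refine lapT_eq_zero_of_forall_windowNorm_eq_zero hf fun a ha => le_antisymm ?_ (sqrt_nonneg _)
    exact h ▸ le_ciSup (bddAbove_range_windowNorm hf) ⟨a, ha⟩
  · simp [lnorm_eq_iSup_windowNorm, windowNorm, lapT_eq_zero_of_ae_eq_zero h]

theorem lnorm_const_mul (α lam : ℝ) (f : ℝ → ℝ) :
    lnorm α (fun t => lam * f t) = |lam| * lnorm α f := by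
  simp only [lnorm_eq_iSup_windowNorm, windowNorm_const_mul, mul_iSup_of_nonneg (abs_nonneg lam)]

theorem lnorm_add_le (hf : IntegrableOn (fun t => f t * exp (-(α * t))) (Ioi 0))
    (hg : IntegrableOn (fun t => g t * exp (-(α * t))) (Ioi 0)) :
    lnorm α (fun t => f t + g t) ≤ lnorm α f + lnorm α g :=
  ciSup_le fun a => (windowNorm_add_le hf hg a.2).trans <| add_le_add
    (le_ciSup (bddAbove_range_windowNorm hf) a) (le_ciSup (bddAbove_range_windowNorm hg) a)

end LNorm

/-- For every `α > 0`, the map `f ↦ |f|_α` is a norm on `L²(0,∞)`: `|f|_α` is finite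
(the supremum is over a bounded set), `|f|_α = 0` iff `f = 0` a.e. on `(0,∞)`,
`|λf|_α = |λ| |f|_α`, and `|f + h|_α ≤ |f|_α + |h|_α`. -/
theorem lnorm_is_norm (α : ℝ) (hα : 0 < α) :
    (∀ f : ℝ → ℝ, MemLp f 2 (volume.restrict (Set.Ioi (0:ℝ))) →
      BddAbove (Set.range fun α' : Set.Ioi α =>
        Real.sqrt (∫ y in (α' : ℝ)..(α' : ℝ) + 1, (lapT f y) ^ 2))) ∧
    (∀ f : ℝ → ℝ, MemLp f 2 (volume.restrict (Set.Ioi (0:ℝ))) →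
      (lnorm α f = 0 ↔ f =ᵐ[volume.restrict (Set.Ioi (0:ℝ))] 0)) ∧
    (∀ f : ℝ → ℝ, ∀ lam : ℝ, MemLp f 2 (volume.restrict (Set.Ioi (0:ℝ))) →
      lnorm α (fun t => lam * f t) = |lam| * lnorm α f) ∧
    (∀ f h : ℝ → ℝ, MemLp f 2 (volume.restrict (Set.Ioi (0:ℝ))) →
      MemLp h 2 (volume.restrict (Set.Ioi (0:ℝ))) →
      lnorm α (fun t => f t + h t) ≤ lnorm α f + lnorm α h) :=
  ⟨fun _ hf => bddAbove_range_windowNorm (hf.integrableOn_mul_exp_neg hα),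
    fun _ hf => lnorm_eq_zero_iff (hf.integrableOn_mul_exp_neg hα),
    fun f lam _ => lnorm_const_mul α lam f,
    fun _ _ hf hh =>
      lnorm_add_le (hf.integrableOn_mul_exp_neg hα) (hh.integrableOn_mul_exp_neg hα)⟩
end

section
/- (Iteration lemma used in the proof of Theorem 2.1) Let δ > 0 and let X : [0,∞) → [0,∞) be bounded on every compact interval, with X(0) = 0. Suppose that for every τ ≥ 0 and every t ∈ [τ, τ + δ], X(t) ≤ (1/2) · sup_{s ∈ [τ, τ+δ]} X(s) + X(τ). Then X(t) = 0 for every t ≥ 0. -/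
open Set

/-- (Iteration lemma used in the proof of Theorem 2.1) Let `δ > 0` and let
`X : [0,∞) → [0,∞)` be bounded on every compact interval, with `X 0 = 0`.
Suppose that for every `τ ≥ 0` and every `t ∈ [τ, τ + δ]`,
`X t ≤ (1/2) · sup_{s ∈ [τ, τ+δ]} X s + X τ`. Then `X t = 0` for every `t ≥ 0`. -/
theorem iteration_lemma (δ : ℝ) (hδ : 0 < δ) (X : ℝ → ℝ)
    (hXnn : ∀ t, 0 ≤ t → 0 ≤ X t)
    (hbdd : ∀ a b : ℝ, BddAbove (X '' Set.Icc a b))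
    (hX0 : X 0 = 0)
    (hiter : ∀ τ ≥ (0:ℝ), ∀ t ∈ Set.Icc τ (τ + δ),
      X t ≤ (1/2) * sSup (X '' Set.Icc τ (τ + δ)) + X τ) :
    ∀ t ≥ (0:ℝ), X t = 0 := by
  -- Step: if X τ = 0 and τ ≥ 0, then X vanishes on [τ, τ+δ].
  have step : ∀ τ ≥ (0:ℝ), X τ = 0 → ∀ t ∈ Set.Icc τ (τ + δ), X t = 0 := by
    intro τ hτ hXτ t ht
    set S := sSup (X '' Set.Icc τ (τ + δ)) with hS
    have hne : (X '' Set.Icc τ (τ + δ)).Nonempty := by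
      exact ⟨X τ, ⟨τ, ⟨le_refl _, by linarith⟩, rfl⟩⟩
    have hSle : S ≤ (1/2) * S := by
      apply csSup_le hne
      rintro x ⟨s, hs, rfl⟩
      have := hiter τ hτ s hs
      rw [hXτ] at this
      linarith
    have hS0 : S ≤ 0 := by linarith
    have := hiter τ hτ t ht
    rw [hXτ] at this
    have h1 : X t ≤ 0 := by linarith
    have h2 : 0 ≤ X t := hXnn t (le_trans hτ ht.1)
    linarith
  -- Induction: X vanishes on [0, n·δ].
  have main : ∀ n : ℕ, ∀ t ∈ Set.Icc (0:ℝ) (n * δ), X t = 0 := by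
    intro n
    induction n with
    | zero => intro t ht; simp at ht; rw [ht, hX0]
    | succ n ih =>
      intro t ht
      rcases le_or_gt t (n * δ) with h | h
      · exact ih t ⟨ht.1, h⟩
      · have hnδ : (0:ℝ) ≤ n * δ := by positivity
        have hXn : X (n * δ) = 0 := ih _ ⟨hnδ, le_refl _⟩
        apply step (n * δ) hnδ hXn t
        constructor
        · linarith
        · have := ht.2
          push_cast at this ⊢
          linarith
  intro t ht
  obtain ⟨n, hn⟩ := exists_nat_gt (t / δ)
  have : t ≤ n * δ := by
    rw [div_lt_iff₀ hδ] at hn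
    linarith
  exact main n t ⟨ht, this⟩
end

section
/- (Divergence of the optimized Schwarz algorithm for an elliptic equation, Example 3.1) Let 0 < L₁ < L₂ < L with 2e^{5L₁} > e^{5L} + 1, and take Robin parameter p = 1. Then there exists q₀ > 0 such that for every q ≥ q₀: the quantities τ₁ = (4e^{4(L₂−L)} + e^{−(L₂−L)} + (e^{4(L₂−L)} − e^{−(L₂−L)})) / (4e^{4L₂} + e^{−L₂} + (e^{4L₂} − e^{−L₂})) and τ₂ = (4e^{4L₁} + e^{−L₁} − q(e^{4L₁} − e^{−L₁})) / (4e^{4(L₁−L)} + e^{−(L₁−L)} − q(e^{4(L₁−L)} − e^{−(L₁−L)})) are well defined (nonzero denominators) and satisfy |τ₁ τ₂| > 1. Consequently, for any real sequences (A_k)_{k≥0}, (B_k)_{k≥0} with A_{k+1} = τ₁ B_k, B_{k+1} = τ₂ A_k and A₀ B₀ ≠ 0, one has |A_k B_k| = |τ₁τ₂|^k |A₀B₀| → ∞ as k → ∞; hence the two-subdomain overlapping Schwarz algorithm with these Robin transmission conditions for u'' − 3u' − 4u = f on (0,L) does not converge. -/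
open Real Filter

/-- (Divergence of the optimized Schwarz algorithm for an elliptic equation, Example 3.1)
If `0 < L₁ < L₂ < L` with `2e^{5L₁} > e^{5L} + 1` and the Robin parameter is `p = 1`,
then for all sufficiently large `q` the amplification ratios `τ₁, τ₂` are well defined
and `|τ₁ τ₂| > 1`; consequently the products `A_k B_k` of the error coefficients satisfy
`|A_k B_k| = |τ₁ τ₂|^k |A₀ B₀| → ∞`, so the algorithm does not converge. -/
theorem schwarz_divergence_example31 (L₁ L₂ L : ℝ)
    (h1 : 0 < L₁) (h2 : L₁ < L₂) (h3 : L₂ < L)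
    (hdiv : 2 * Real.exp (5 * L₁) > Real.exp (5 * L) + 1) :
    ∃ q₀ > (0:ℝ), ∀ q ≥ q₀,
      (4 * Real.exp (4 * L₂) + Real.exp (-L₂)
          + (Real.exp (4 * L₂) - Real.exp (-L₂)) ≠ 0) ∧
      (4 * Real.exp (4 * (L₁ - L)) + Real.exp (-(L₁ - L))
          - q * (Real.exp (4 * (L₁ - L)) - Real.exp (-(L₁ - L))) ≠ 0) ∧
      ∀ τ₁ τ₂ : ℝ,
        τ₁ = (4 * Real.exp (4 * (L₂ - L)) + Real.exp (-(L₂ - L))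
                + (Real.exp (4 * (L₂ - L)) - Real.exp (-(L₂ - L))))
            / (4 * Real.exp (4 * L₂) + Real.exp (-L₂)
                + (Real.exp (4 * L₂) - Real.exp (-L₂))) →
        τ₂ = (4 * Real.exp (4 * L₁) + Real.exp (-L₁)
                - q * (Real.exp (4 * L₁) - Real.exp (-L₁)))
            / (4 * Real.exp (4 * (L₁ - L)) + Real.exp (-(L₁ - L))
                - q * (Real.exp (4 * (L₁ - L)) - Real.exp (-(L₁ - L)))) →
        |τ₁ * τ₂| > 1 ∧
        ∀ A B : ℕ → ℝ,
          (∀ k, A (k + 1) = τ₁ * B k) → (∀ k, B (k + 1) = τ₂ * A k) →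
          A 0 * B 0 ≠ 0 →
          (∀ k, |A k * B k| = |τ₁ * τ₂| ^ k * |A 0 * B 0|) ∧
          Tendsto (fun k => |A k * B k|) atTop atTop := by
  set a : ℝ := 4 * Real.exp (4 * L₁) + Real.exp (-L₁) with ha
  set b : ℝ := Real.exp (4 * L₁) - Real.exp (-L₁) with hb
  set c : ℝ := 4 * Real.exp (4 * (L₁ - L)) + Real.exp (-(L₁ - L)) with hc
  set d : ℝ := Real.exp (4 * (L₁ - L)) - Real.exp (-(L₁ - L)) with hd
  set e : ℝ := Real.exp (-(4 * L)) with he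
  set ε : ℝ := e * b + d with hε
  have he0 : 0 < e := Real.exp_pos _
  have ha0 : 0 < a := by positivity
  have hb0 : 0 < b := by
    have : Real.exp (-L₁) < Real.exp (4 * L₁) := Real.exp_lt_exp.mpr (by linarith)
    rw [hb]; linarith
  have hc0 : 0 < c := by positivity
  have hd0 : d < 0 := by
    have : Real.exp (4 * (L₁ - L)) < Real.exp (-(L₁ - L)) :=
      Real.exp_lt_exp.mpr (by linarith)
    rw [hd]; linarith
  have hkey : ε * Real.exp (L₁ + 4 * L) =
      2 * Real.exp (5 * L₁) - Real.exp (5 * L) - 1 := by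
    rw [hε, he, hb, hd]
    have e1 : Real.exp (-(4*L)) * Real.exp (4*L₁) * Real.exp (L₁ + 4*L)
        = Real.exp (5 * L₁) := by
      rw [← Real.exp_add, ← Real.exp_add]; ring_nf
    have e2 : Real.exp (-(4*L)) * Real.exp (-L₁) * Real.exp (L₁ + 4*L) = 1 := by
      rw [← Real.exp_add, ← Real.exp_add]; ring_nf; exact Real.exp_zero
    have e3 : Real.exp (4*(L₁ - L)) * Real.exp (L₁ + 4*L) = Real.exp (5 * L₁) := by
      rw [← Real.exp_add]; ring_nf
    have e4 : Real.exp (-(L₁ - L)) * Real.exp (L₁ + 4*L) = Real.exp (5 * L) := by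
      rw [← Real.exp_add]; ring_nf
    nlinarith [e1, e2, e3, e4]
  have hε0 : 0 < ε := by
    have hE : 0 < Real.exp (L₁ + 4 * L) := Real.exp_pos _
    nlinarith [hkey]
  refine ⟨(c + e * a) / ε + a / b + 1, by positivity, fun q hq => ?_⟩
  have hq1 : q * ε > c + e * a := by
    have h' : (c + e * a) / ε < q := by
      have : 0 ≤ a / b := by positivity
      linarith
    calc c + e * a = (c + e * a) / ε * ε := by field_simp
    _ < q * ε := by exact mul_lt_mul_of_pos_right h' hε0
  have hq2 : q * b > a := by
    have h' : a / b < q := by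
      have : 0 ≤ (c + e * a) / ε := by positivity
      linarith
    calc a = a / b * b := by field_simp
    _ < q * b := mul_lt_mul_of_pos_right h' hb0
  have hqpos : 0 < q := by
    have : (0:ℝ) < (c + e * a) / ε + a / b + 1 := by positivity
    linarith
  have hD : 0 < c - q * d := by nlinarith
  have hden1 : 4 * Real.exp (4 * L₂) + Real.exp (-L₂)
      + (Real.exp (4 * L₂) - Real.exp (-L₂)) = 5 * Real.exp (4 * L₂) := by ring
  have hden1ne : 4 * Real.exp (4 * L₂) + Real.exp (-L₂)
      + (Real.exp (4 * L₂) - Real.exp (-L₂)) ≠ 0 := by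
    rw [hden1]; positivity
  refine ⟨hden1ne, ne_of_gt hD, fun τ₁ τ₂ hτ₁ hτ₂ => ?_⟩
  have hτ₁' : τ₁ = e := by
    rw [hτ₁, hden1, he]
    have : 4 * Real.exp (4 * (L₂ - L)) + Real.exp (-(L₂ - L))
        + (Real.exp (4 * (L₂ - L)) - Real.exp (-(L₂ - L)))
        = 5 * (Real.exp (-(4*L)) * Real.exp (4 * L₂)) := by
      rw [← Real.exp_add]; ring_nf
    rw [this]
    field_simp
  have hτ₂' : τ₂ = (a - q * b) / (c - q * d) := hτ₂
  have hprod : τ₁ * τ₂ = e * (a - q * b) / (c - q * d) := by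
    rw [hτ₁', hτ₂']; ring
  have hnum_neg : e * (a - q * b) < 0 := mul_neg_of_pos_of_neg he0 (by linarith)
  have habs : |τ₁ * τ₂| = e * (q * b - a) / (c - q * d) := by
    rw [hprod, abs_div, abs_of_pos hD, abs_of_neg hnum_neg]; ring_nf
  have hgt : |τ₁ * τ₂| > 1 := by
    rw [habs, gt_iff_lt, lt_div_iff₀ hD, one_mul]
    have expand : e * (q * b - a) = q * ε - q * d - e * a := by rw [hε]; ring
    linarith [expand, hq1]
  refine ⟨hgt, fun A B hA hB h0 => ?_⟩
  have hrec : ∀ k, |A k * B k| = |τ₁ * τ₂| ^ k * |A 0 * B 0| := by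
    intro k
    induction k with
    | zero => simp
    | succ n ih =>
        rw [hA, hB, show τ₁ * B n * (τ₂ * A n) = (τ₁ * τ₂) * (A n * B n) by ring,
          abs_mul, ih, pow_succ]
        ring
  refine ⟨hrec, ?_⟩
  have h0' : 0 < |A 0 * B 0| := abs_pos.mpr h0
  have := (tendsto_pow_atTop_atTop_of_one_lt hgt).atTop_mul_const h0'
  exact this.congr fun k => (hrec k).symm
end
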